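/- Closure under causal equivalence: Let T, S be two recursive causal teams (resp. two recursive generalized causal teams) over σ with T ≈ S. Then for every formula φ of CO⩗[σ] or COD[σ]: T ⊨ φ if and only if S ⊨ φ. -/

import Mathlib

open scoped Classical
set_option linter.unusedSectionVars false

noncomputable section

/-- Assignments of values to variables. -/
abbrev Asg (V : Type) (Val : V → Type) : Type := (v : V) → Val v

/-- A recursive system of functions over the signature `(V, Val)`:
each endogenous variable `v ∈ En` has a parent set `pa v` and a function `fn v`
computing its value from the values of its parents; recursiveness says that the
induced causal graph is acyclic. -/
structure Sys (V : Type) (Val : V → Type) : Type where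
  En : Finset V
  pa : V → Finset V
  fn : (v : V) → ((w : V) → w ∈ pa v → Val w) → Val v
  recursive : ∀ x : V, ¬ Relation.TransGen (fun a b => b ∈ En ∧ a ∈ pa b) x x

variable {V : Type} [Fintype V] [DecidableEq V] [Nonempty V]
  {Val : V → Type} [∀ v, Fintype (Val v)] [∀ v, DecidableEq (Val v)] [∀ v, Nonempty (Val v)]

namespace CausalTeam

/-- The edge relation of the causal graph of a system of functions. -/
@[reducible] def Edge (F : Sys V Val) (a b : V) : Prop := b ∈ F.En ∧ a ∈ F.pa b

theorem wfEdge (F : Sys V Val) : WellFounded (Edge F) := by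
  have h2 : WellFounded (Relation.TransGen (Edge F)) := by
    have hirr : IsIrrefl V (Relation.TransGen (Edge F)) := ⟨F.recursive⟩
    have htr : IsTrans V (Relation.TransGen (Edge F)) :=
      ⟨fun _ _ _ h h' => Relation.TransGen.trans h h'⟩
    exact Finite.wellFounded_of_trans_of_irrefl _
  exact Subrelation.wf (fun h => Relation.TransGen.single h) h2

/-- An assignment is compatible with a system of functions if every endogenous
variable takes the value prescribed by its function. -/
def Compat (F : Sys V Val) (s : Asg V Val) : Prop :=
  ∀ v ∈ F.En, s v = F.fn v (fun w _ => s w)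

/-- The variables occurring in a conjunction of equations `𝐗 = 𝐱`. -/
def ikeys (I : List ((v : V) × Val v)) : List V := I.map Sigma.fst

/-- A conjunction of equations is consistent if it contains no pair `X = x`, `X = x'`
with distinct values `x ≠ x'`. -/
def IConsistent (I : List ((v : V) × Val v)) : Prop :=
  ∀ p ∈ I, ∀ q ∈ I, p.1 = q.1 → p = q

/-- Look up the (first) value assigned to a variable by a conjunction of equations. -/
def ilookup : List ((v : V) × Val v) → (v : V) → Option (Val v)
  | [], _ => none
  | p :: I, v => if h : p.1 = v then some (h ▸ p.2) else ilookup I v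

/-- The intervened system of functions `F_{𝐗=𝐱}`: the restriction of `F` to `En(F) ∖ 𝐗`. -/
def doSys (F : Sys V Val) (I : List ((v : V) × Val v)) : Sys V Val where
  En := F.En.filter (fun v => v ∉ ikeys I)
  pa := F.pa
  fn := F.fn
  recursive := by
    intro x hx
    refine F.recursive x (Relation.TransGen.mono (fun a b hab => ?_) x x hx)
    exact ⟨(Finset.mem_filter.mp hab.1).1, hab.2⟩

/-- The intervened assignment `s_{𝐗=𝐱}`: variables in `𝐗` get the prescribed values,
exogenous variables outside `𝐗` keep their values, and endogenous variables outside `𝐗`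
are recomputed (recursively) by their functions. -/
def doAsg (F : Sys V Val) (I : List ((v : V) × Val v)) (s : Asg V Val) : Asg V Val :=
  (wfEdge F).fix (C := fun v => Val v) fun v ih =>
    match ilookup I v with
    | some x => x
    | none => if h : v ∈ F.En then F.fn v (fun w hw => ih w ⟨h, hw⟩) else s v

/-- Formulas of the languages CO[σ], CO⩗[σ] and COD[σ]:
equations `X = x`, dependence atoms `=(𝐗;Y)`, negation, conjunction,
tensor disjunction `∨`, intuitionistic disjunction `⩗`, and counterfactuals `𝐗=𝐱 □→ φ`. -/
inductive Fml (V : Type) (Val : V → Type) : Type where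
  | eq : (v : V) → Val v → Fml V Val
  | dep : List V → V → Fml V Val
  | neg : Fml V Val → Fml V Val
  | and : Fml V Val → Fml V Val → Fml V Val
  | or : Fml V Val → Fml V Val → Fml V Val
  | ior : Fml V Val → Fml V Val → Fml V Val
  | cf : List ((v : V) × Val v) → Fml V Val → Fml V Val

/-- CO[σ]-formulas: equations, closed under ¬, ∧, ∨ and counterfactuals. -/
inductive IsCO : Fml V Val → Prop where
  | eq (v : V) (x : Val v) : IsCO (Fml.eq v x)
  | neg {φ} : IsCO φ → IsCO (Fml.neg φ)
  | and {φ ψ} : IsCO φ → IsCO ψ → IsCO (Fml.and φ ψ)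
  | or {φ ψ} : IsCO φ → IsCO ψ → IsCO (Fml.or φ ψ)
  | cf {φ} (I : List ((v : V) × Val v)) : IsCO φ → IsCO (Fml.cf I φ)

/-- CO⩗[σ]-formulas: additionally closed under ⩗; negation applies to CO-formulas only. -/
inductive IsCOV : Fml V Val → Prop where
  | eq (v : V) (x : Val v) : IsCOV (Fml.eq v x)
  | neg {φ} : IsCO φ → IsCOV (Fml.neg φ)
  | and {φ ψ} : IsCOV φ → IsCOV ψ → IsCOV (Fml.and φ ψ)
  | or {φ ψ} : IsCOV φ → IsCOV ψ → IsCOV (Fml.or φ ψ)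
  | ior {φ ψ} : IsCOV φ → IsCOV ψ → IsCOV (Fml.ior φ ψ)
  | cf {φ} (I : List ((v : V) × Val v)) : IsCOV φ → IsCOV (Fml.cf I φ)

/-- COD[σ]-formulas: additionally allow dependence atoms; negation applies to
CO-formulas only. -/
inductive IsCOD : Fml V Val → Prop where
  | eq (v : V) (x : Val v) : IsCOD (Fml.eq v x)
  | dep (X : List V) (Y : V) : IsCOD (Fml.dep X Y)
  | neg {φ} : IsCO φ → IsCOD (Fml.neg φ)
  | and {φ ψ} : IsCOD φ → IsCOD ψ → IsCOD (Fml.and φ ψ)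
  | or {φ ψ} : IsCOD φ → IsCOD ψ → IsCOD (Fml.or φ ψ)
  | cf {φ} (I : List ((v : V) × Val v)) : IsCOD φ → IsCOD (Fml.cf I φ)

/-- Satisfaction over causal teams `(Tm, F)` (the causal team semantics `⊨^c`). -/
def satC : Set (Asg V Val) → Sys V Val → Fml V Val → Prop
  | Tm, _, Fml.eq v x => ∀ s ∈ Tm, s v = x
  | Tm, _, Fml.dep X Y => ∀ s ∈ Tm, ∀ t ∈ Tm, (∀ w ∈ X, s w = t w) → s Y = t Y
  | Tm, F, Fml.neg φ => ∀ s ∈ Tm, ¬ satC {s} F φ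
  | Tm, F, Fml.and φ ψ => satC Tm F φ ∧ satC Tm F ψ
  | Tm, F, Fml.or φ ψ => ∃ T1 T2 : Set (Asg V Val), T1 ∪ T2 = Tm ∧ satC T1 F φ ∧ satC T2 F ψ
  | Tm, F, Fml.ior φ ψ => satC Tm F φ ∨ satC Tm F ψ
  | Tm, F, Fml.cf I φ => IConsistent I → satC (doAsg F I '' Tm) (doSys F I) φ

/-- Satisfaction over generalized causal teams (the semantics `⊨^g`). -/
def satG : Set (Asg V Val × Sys V Val) → Fml V Val → Prop
  | T, Fml.eq v x => ∀ p ∈ T, p.1 v = x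
  | T, Fml.dep X Y => ∀ p ∈ T, ∀ q ∈ T, (∀ w ∈ X, p.1 w = q.1 w) → p.1 Y = q.1 Y
  | T, Fml.neg φ => ∀ p ∈ T, ¬ satG {p} φ
  | T, Fml.and φ ψ => satG T φ ∧ satG T ψ
  | T, Fml.or φ ψ => ∃ T1 T2 : Set (Asg V Val × Sys V Val), T1 ∪ T2 = T ∧ satG T1 φ ∧ satG T2 ψ
  | T, Fml.ior φ ψ => satG T φ ∨ satG T ψ
  | T, Fml.cf I φ => IConsistent I →
      satG ((fun p : Asg V Val × Sys V Val => (doAsg p.2 I p.1, doSys p.2 I)) '' T) φ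

/-- A generalized causal team: a set of pairs `(s, F)` with `s` compatible with `F`. -/
def GTOk (T : Set (Asg V Val × Sys V Val)) : Prop := ∀ p ∈ T, Compat p.2 p.1

/-- The falsum `⊥`, an abbreviation for `X=x ∧ ¬(X=x)`. -/
def fBot : Fml V Val :=
  Fml.and (Fml.eq (Classical.arbitrary V) (Classical.arbitrary (Val (Classical.arbitrary V))))
    (Fml.neg (Fml.eq (Classical.arbitrary V) (Classical.arbitrary (Val (Classical.arbitrary V)))))

/-- A canonical tautology. -/
def fTop : Fml V Val := Fml.neg fBot

/-- Finite conjunction of a list of formulas. -/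
def bigAnd : List (Fml V Val) → Fml V Val
  | [] => fTop
  | [φ] => φ
  | φ :: ψ :: rest => Fml.and φ (bigAnd (ψ :: rest))

/-- Finite tensor disjunction of a list of formulas. -/
def bigOr : List (Fml V Val) → Fml V Val
  | [] => fBot
  | [φ] => φ
  | φ :: ψ :: rest => Fml.or φ (bigOr (ψ :: rest))

/-- Finite intuitionistic disjunction of a list of formulas. -/
def bigIor : List (Fml V Val) → Fml V Val
  | [] => fBot
  | [φ] => φ
  | φ :: ψ :: rest => Fml.ior φ (bigIor (ψ :: rest))

/-- The conjunction of equations describing the restriction of the assignment `t`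
to the set `S` of variables. -/
def eqList (S : Finset V) (t : Asg V Val) : List ((v : V) × Val v) :=
  S.toList.map (fun w => ⟨w, t w⟩)

/-- The list of all assignments over the signature. -/
def allAsg : List (Asg V Val) := (Finset.univ : Finset (Asg V Val)).toList

/-- `η(v)`: for every tuple of values for the variables other than `v`, intervening
with those values forces `v` to take the value computed by `F.fn v` from the parents. -/
def eta (F : Sys V Val) (v : V) : Fml V Val :=
  bigAnd (allAsg.map (fun t =>
    Fml.cf (eqList (Finset.univ.erase v) t) (Fml.eq v (F.fn v (fun w _ => t w)))))

/-- `ξ(v)`: the value of `v` is unaffected by interventions on all other variables. -/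
def xi (v : V) : Fml V Val :=
  bigAnd ((Finset.univ : Finset (Val v)).toList.map (fun x =>
    bigAnd (allAsg.map (fun t =>
      Fml.or (Fml.neg (Fml.eq v x))
        (Fml.cf (eqList (Finset.univ.erase v) t) (Fml.eq v x))))))

/-- `Cn(F)`: the endogenous variables of `F` governed by a constant function. -/
def Cn (F : Sys V Val) : Finset V :=
  F.En.filter (fun v => ∃ c : Val v, ∀ p, F.fn v p = c)

/-- The non-constant endogenous variables `En(F) ∖ Cn(F)`. -/
def strictEn (F : Sys V Val) : Finset V := F.En \ Cn F

/-- `F_v ∼ G_v`: equivalence of the two functions for `v` up to dummy arguments. -/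
def SimFn (F G : Sys V Val) (v : V) : Prop :=
  ∀ (x : (w : V) → w ∈ F.pa v ∩ G.pa v → Val w)
    (y : (w : V) → w ∈ F.pa v \ G.pa v → Val w)
    (z : (w : V) → w ∈ G.pa v \ F.pa v → Val w),
    F.fn v (fun w hw =>
      if h : w ∈ G.pa v then x w (Finset.mem_inter.mpr ⟨hw, h⟩)
      else y w (Finset.mem_sdiff.mpr ⟨hw, h⟩)) =
    G.fn v (fun w hw =>
      if h : w ∈ F.pa v then x w (Finset.mem_inter.mpr ⟨h, hw⟩)
      else z w (Finset.mem_sdiff.mpr ⟨hw, h⟩))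

/-- `F ∼ G`: equivalence of systems of functions up to dummy arguments. -/
def Sim (F G : Sys V Val) : Prop :=
  strictEn F = strictEn G ∧ ∀ v ∈ strictEn F, SimFn F G v

/-- The CO[σ]-formula `Φ^F` characterizing the function component `F` up to `∼`. -/
def Phi (F : Sys V Val) : Fml V Val :=
  Fml.and (bigAnd (F.En.toList.map (fun v => eta F v)))
    (bigAnd ((((Finset.univ : Finset V) \ F.En) ∪ Cn F).toList.map (fun v => xi v)))

/-- The CO[σ]-formula `Θ^A`: the team component is included in `A`. -/
def Theta (A : Finset (Asg V Val)) : Fml V Val :=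
  bigOr (A.toList.map (fun s =>
    bigAnd ((Finset.univ : Finset V).toList.map (fun v => Fml.eq v (s v)))))

/-- `χ₁`: all variables are constant in the team. -/
def chi1 : Fml V Val :=
  bigAnd ((Finset.univ : Finset V).toList.map (fun v => Fml.dep [] v))

/-- `χ_k`: the team has at most `k` elements. -/
def chi : ℕ → Fml V Val
  | 0 => fBot
  | 1 => chi1
  | (k+2) => Fml.or chi1 (chi (k+1))

end CausalTeam

open CausalTeam

/-- The restriction `T^F` of a generalized causal team to members whose function
component is `∼`-equivalent to `F` (team component thereof). -/
def gRestrict {V : Type} [Fintype V] [DecidableEq V] [Nonempty V]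
    {Val : V → Type} [∀ v, Fintype (Val v)] [∀ v, DecidableEq (Val v)] [∀ v, Nonempty (Val v)]
    (T : Set (Asg V Val × Sys V Val)) (F : Sys V Val) : Set (Asg V Val) :=
  {s | ∃ G : Sys V Val, (s, G) ∈ T ∧ Sim G F}

/-!
Two `∼`-equivalent systems of functions differ only in dummy arguments and in which constant
mechanisms they list as endogenous. On an assignment compatible with both, a constant mechanism
just reproduces the current value, so every intervention has the same outcome under either
system, and the intervened systems are again `∼`-equivalent. Satisfaction is then invariant by
induction on the formula, carried out for generalized causal teams, where `T ≈ S` says that each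
member of one team is matched in the other by a member with the same assignment and an equivalent
system; a split `T = T₁ ∪ T₂` for the tensor disjunction is transported to `S` by taking the
members of `S` matched in `T₁` and in `T₂`. A causal team `(T⁻, F)` behaves as the generalized
causal team `T⁻ × {F}`.
-/

lemma image_fst_prod_singleton {α β : Type*} {U : Set (α × β)} {A : Set α} {b : β}
    (h : U ⊆ A ×ˢ {b}) : (Prod.fst '' U) ×ˢ {b} = U := by
  ext ⟨a, c⟩
  constructor
  · rintro ⟨⟨⟨a', c'⟩, hU, rfl⟩, rfl⟩
    obtain ⟨-, rfl⟩ := h hU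
    exact hU
  · intro hU
    exact ⟨⟨(a, c), hU, rfl⟩, (h hU).2⟩

namespace CausalTeam

lemma fn_congr (F : Sys V Val) (v : V) {a b : Asg V Val} (h : ∀ w ∈ F.pa v, a w = b w) :
    F.fn v (fun w _ => a w) = F.fn v (fun w _ => b w) :=
  congrArg (F.fn v) (funext₂ h)

lemma simFn_iff {F G : Sys V Val} {v : V} :
    SimFn F G v ↔ ∀ t : Asg V Val, F.fn v (fun w _ => t w) = G.fn v (fun w _ => t w) := by
  constructor
  · intro h t
    simpa using h (fun w _ => t w) (fun w _ => t w) (fun w _ => t w)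
  · intro h x y z
    let t : Asg V Val := fun w =>
      if hw : w ∈ F.pa v ∩ G.pa v then x w hw
      else if hw : w ∈ F.pa v \ G.pa v then y w hw
      else if hw : w ∈ G.pa v \ F.pa v then z w hw
      else Classical.arbitrary _
    convert h t using 2 <;> funext w hw <;> by_cases hF : w ∈ F.pa v <;>
      by_cases hG : w ∈ G.pa v <;> simp_all [t]

lemma Sim.refl (F : Sys V Val) : Sim F F :=
  ⟨rfl, fun _ _ => simFn_iff.mpr fun _ => rfl⟩

lemma Sim.symm {F G : Sys V Val} (h : Sim F G) : Sim G F :=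
  ⟨h.1.symm, fun v hv => simFn_iff.mpr fun t => (simFn_iff.mp (h.2 v (h.1 ▸ hv)) t).symm⟩

lemma Sim.trans {F G H : Sys V Val} (h₁ : Sim F G) (h₂ : Sim G H) : Sim F H :=
  ⟨h₁.1.trans h₂.1, fun v hv => simFn_iff.mpr fun t =>
    (simFn_iff.mp (h₁.2 v hv) t).trans (simFn_iff.mp (h₂.2 v (h₁.1 ▸ hv)) t)⟩

lemma ilookup_eq_none_iff {I : List ((v : V) × Val v)} {v : V} :
    ilookup I v = none ↔ v ∉ ikeys I := by
  induction I with
  | nil => simp [ilookup, ikeys]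
  | cons p I ih =>
    by_cases h : p.1 = v
    · simp [ilookup, ikeys, h]
    · simp [ilookup, ikeys, h, ih, Ne.symm h]

lemma doAsg_apply (F : Sys V Val) (I : List ((v : V) × Val v)) (s : Asg V Val) (v : V) :
    doAsg F I s v = match ilookup I v with
      | some x => x
      | none => if v ∈ F.En then F.fn v (fun w _ => doAsg F I s w) else s v :=
  WellFounded.fix_eq _ _ v

lemma doAsg_of_ilookup_eq_some {F : Sys V Val} {I : List ((v : V) × Val v)} {s : Asg V Val}
    {v : V} {x : Val v} (h : ilookup I v = some x) : doAsg F I s v = x := by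
  rw [doAsg_apply, h]

lemma doAsg_of_mem_En {F : Sys V Val} {I : List ((v : V) × Val v)} {s : Asg V Val} {v : V}
    (h : ilookup I v = none) (hv : v ∈ F.En) :
    doAsg F I s v = F.fn v (fun w _ => doAsg F I s w) := by
  rw [doAsg_apply, h]; exact if_pos hv

lemma doAsg_of_not_mem_En {F : Sys V Val} {I : List ((v : V) × Val v)} {s : Asg V Val} {v : V}
    (h : ilookup I v = none) (hv : v ∉ F.En) : doAsg F I s v = s v := by
  rw [doAsg_apply, h]; exact if_neg hv

lemma mem_strictEn {F : Sys V Val} {v : V} :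
    v ∈ strictEn F ↔ v ∈ F.En ∧ ¬ ∃ c : Val v, ∀ p, F.fn v p = c := by
  simp only [strictEn, Cn, Finset.mem_sdiff, Finset.mem_filter, not_and, and_congr_right_iff]
  tauto

lemma Sim.mem_strictEn_iff {F G : Sys V Val} (h : Sim F G) {v : V} :
    v ∈ strictEn F ↔ v ∈ strictEn G := by
  rw [h.1]

lemma doAsg_of_not_mem_strictEn {F : Sys V Val} {I : List ((v : V) × Val v)} {s : Asg V Val}
    {v : V} (hs : Compat F s) (h : ilookup I v = none) (hv : v ∉ strictEn F) :
    doAsg F I s v = s v := by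
  by_cases hen : v ∈ F.En
  · obtain ⟨c, hc⟩ : ∃ c : Val v, ∀ p, F.fn v p = c := by
      by_contra hcon
      exact hv (mem_strictEn.mpr ⟨hen, hcon⟩)
    rw [doAsg_of_mem_En h hen, hc, hs v hen, hc]
  · exact doAsg_of_not_mem_En h hen

/-- On a compatible assignment a constant mechanism just reproduces the current value, so only
the non-constant mechanisms matter, and there `F` and `G` agree. -/
lemma Sim.doAsg_eq {F G : Sys V Val} (hFG : Sim F G) (I : List ((v : V) × Val v))
    {s : Asg V Val} (hF : Compat F s) (hG : Compat G s) : doAsg F I s = doAsg G I s := by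
  funext v
  induction v using (wfEdge F).induction with
  | _ v ih =>
  rcases hI : ilookup I v with _ | x
  · by_cases hv : v ∈ strictEn F
    · have hvG : v ∈ strictEn G := hFG.mem_strictEn_iff.mp hv
      rw [doAsg_of_mem_En hI (Finset.sdiff_subset hv),
        doAsg_of_mem_En hI (Finset.sdiff_subset hvG),
        fn_congr F v fun w hw => ih w ⟨Finset.sdiff_subset hv, hw⟩]
      exact simFn_iff.mp (hFG.2 v hv) _
    · rw [doAsg_of_not_mem_strictEn hF hI hv,
        doAsg_of_not_mem_strictEn hG hI (mt hFG.mem_strictEn_iff.mpr hv)]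
  · rw [doAsg_of_ilookup_eq_some hI, doAsg_of_ilookup_eq_some hI]

lemma compat_doAsg (F : Sys V Val) (I : List ((v : V) × Val v)) (s : Asg V Val) :
    Compat (doSys F I) (doAsg F I s) := fun _ hv =>
  have hv' := Finset.mem_filter.mp hv
  doAsg_of_mem_En (ilookup_eq_none_iff.mpr hv'.2) hv'.1

lemma strictEn_doSys (F : Sys V Val) (I : List ((v : V) × Val v)) :
    strictEn (doSys F I) = (strictEn F).filter (· ∉ ikeys I) := by
  ext v
  have hEn : (doSys F I).En = F.En.filter (· ∉ ikeys I) := rfl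
  have hfn : (doSys F I).fn = F.fn := rfl
  simp only [strictEn, Cn, hEn, hfn, Finset.mem_sdiff, Finset.mem_filter]
  tauto

lemma Sim.doSys {F G : Sys V Val} (h : Sim F G) (I : List ((v : V) × Val v)) :
    Sim (doSys F I) (doSys G I) := by
  refine ⟨by rw [strictEn_doSys, strictEn_doSys, h.1], fun v hv => ?_⟩
  rw [strictEn_doSys] at hv
  exact h.2 v (Finset.mem_filter.mp hv).1

def doPair (I : List ((v : V) × Val v)) (p : Asg V Val × Sys V Val) : Asg V Val × Sys V Val :=
  (doAsg p.2 I p.1, doSys p.2 I)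

/-- `T ≈ S` holds iff `SimCovers T S ∧ SimCovers S T`. -/
def SimCovers (T S : Set (Asg V Val × Sys V Val)) : Prop :=
  ∀ p ∈ S, ∃ H, (p.1, H) ∈ T ∧ Sim H p.2

def matchedBy (S T₁ : Set (Asg V Val × Sys V Val)) : Set (Asg V Val × Sys V Val) :=
  {q ∈ S | ∃ H, (q.1, H) ∈ T₁ ∧ Sim H q.2}

lemma matchedBy_subset (S T₁ : Set (Asg V Val × Sys V Val)) : matchedBy S T₁ ⊆ S :=
  Set.sep_subset _ _

lemma simCovers_of_gRestrict_subset {T S : Set (Asg V Val × Sys V Val)}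
    (h : ∀ F, gRestrict S F ⊆ gRestrict T F) : SimCovers T S :=
  fun p hp => h p.2 ⟨p.2, hp, Sim.refl p.2⟩

lemma simCovers_singleton {s : Asg V Val} {G H : Sys V Val} (h : Sim G H) :
    SimCovers {(s, G)} {(s, H)} := by
  rintro p rfl
  exact ⟨G, rfl, h⟩

lemma simCovers_prod_singleton (Tm : Set (Asg V Val)) {F G : Sys V Val} (h : Sim F G) :
    SimCovers (Tm ×ˢ {F}) (Tm ×ˢ {G}) := by
  rintro ⟨s, _⟩ ⟨hs, rfl⟩
  exact ⟨F, ⟨hs, rfl⟩, h⟩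

lemma SimCovers.image_doPair {T S : Set (Asg V Val × Sys V Val)} (h : SimCovers T S)
    (hT : GTOk T) (hS : GTOk S) (I : List ((v : V) × Val v)) :
    SimCovers (doPair I '' T) (doPair I '' S) := by
  rintro _ ⟨⟨s, G⟩, hsG, rfl⟩
  obtain ⟨H, hsH, hHG⟩ := h _ hsG
  refine ⟨doSys H I, ⟨(s, H), hsH, ?_⟩, hHG.doSys I⟩
  simp only [doPair, hHG.doAsg_eq I (hT _ hsH) (hS _ hsG)]

lemma simCovers_matchedBy (S T₁ : Set (Asg V Val × Sys V Val)) :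
    SimCovers T₁ (matchedBy S T₁) :=
  fun _ hq => hq.2

lemma SimCovers.matchedBy {T S T₁ : Set (Asg V Val × Sys V Val)} (h : SimCovers S T)
    (hT₁ : T₁ ⊆ T) : SimCovers (matchedBy S T₁) T₁ := by
  intro p hp
  obtain ⟨G, hG, hGp⟩ := h p (hT₁ hp)
  exact ⟨G, ⟨hG, p.2, hp, hGp.symm⟩, hGp⟩

lemma matchedBy_union {S T₁ T₂ : Set (Asg V Val × Sys V Val)} (h : SimCovers (T₁ ∪ T₂) S) :
    matchedBy S T₁ ∪ matchedBy S T₂ = S := by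
  refine Set.Subset.antisymm
    (Set.union_subset (matchedBy_subset S T₁) (matchedBy_subset S T₂)) fun q hq => ?_
  obtain ⟨H, hH | hH, hHq⟩ := h q hq
  exacts [Or.inl ⟨hq, H, hH, hHq⟩, Or.inr ⟨hq, H, hH, hHq⟩]

lemma GTOk.mono {T S : Set (Asg V Val × Sys V Val)} (hT : GTOk T) (h : S ⊆ T) : GTOk S :=
  fun p hp => hT p (h hp)

lemma gtOk_singleton {s : Asg V Val} {F : Sys V Val} (h : Compat F s) :
    GTOk ({(s, F)} : Set (Asg V Val × Sys V Val)) := by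
  rintro p rfl
  exact h

lemma gtOk_prod_singleton {Tm : Set (Asg V Val)} {F : Sys V Val} (h : ∀ s ∈ Tm, Compat F s) :
    GTOk (Tm ×ˢ {F}) := by
  rintro ⟨s, _⟩ ⟨hs, rfl⟩
  exact h s hs

lemma gtOk_image_doPair (T : Set (Asg V Val × Sys V Val)) (I : List ((v : V) × Val v)) :
    GTOk (doPair I '' T) := by
  rintro _ ⟨⟨s, G⟩, -, rfl⟩
  exact compat_doAsg G I s

lemma satG_of_simCovers (φ : Fml V Val) :
    ∀ {T S : Set (Asg V Val × Sys V Val)}, GTOk T → GTOk S → SimCovers T S → SimCovers S T →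
      satG T φ → satG S φ := by
  induction φ with
  | eq v x =>
    intro T S _ _ hTS _ hsat p hp
    obtain ⟨H, hH, -⟩ := hTS p hp
    exact hsat (p.1, H) hH
  | dep X Y =>
    intro T S _ _ hTS _ hsat p hp q hq hpq
    obtain ⟨Hp, hHp, -⟩ := hTS p hp
    obtain ⟨Hq, hHq, -⟩ := hTS q hq
    exact hsat (p.1, Hp) hHp (q.1, Hq) hHq hpq
  | neg φ ih =>
    intro T S hT hS hTS _ hsat p hp hp'
    obtain ⟨H, hH, hHp⟩ := hTS p hp
    exact hsat _ hH (ih (gtOk_singleton (hS p hp)) (gtOk_singleton (hT _ hH))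
      (simCovers_singleton hHp.symm) (simCovers_singleton hHp) hp')
  | and φ ψ ihφ ihψ =>
    intro T S hT hS hTS hST hsat
    exact ⟨ihφ hT hS hTS hST hsat.1, ihψ hT hS hTS hST hsat.2⟩
  | or φ ψ ihφ ihψ =>
    rintro _ S hT hS hTS hST ⟨T₁, T₂, rfl, h₁, h₂⟩
    exact ⟨matchedBy S T₁, matchedBy S T₂, matchedBy_union hTS,
      ihφ (hT.mono Set.subset_union_left) (hS.mono (matchedBy_subset S T₁))
        (simCovers_matchedBy S T₁) (hST.matchedBy Set.subset_union_left) h₁,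
      ihψ (hT.mono Set.subset_union_right) (hS.mono (matchedBy_subset S T₂))
        (simCovers_matchedBy S T₂) (hST.matchedBy Set.subset_union_right) h₂⟩
  | ior φ ψ ihφ ihψ =>
    intro T S hT hS hTS hST hsat
    exact hsat.imp (ihφ hT hS hTS hST) (ihψ hT hS hTS hST)
  | cf I φ ih =>
    intro T S hT hS hTS hST hsat hI
    exact ih (gtOk_image_doPair T I) (gtOk_image_doPair S I) (hTS.image_doPair hT hS I)
      (hST.image_doPair hS hT I) (hsat hI)

lemma satG_iff_of_simCovers {T S : Set (Asg V Val × Sys V Val)} (hT : GTOk T) (hS : GTOk S)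
    (hTS : SimCovers T S) (hST : SimCovers S T) (φ : Fml V Val) : satG T φ ↔ satG S φ :=
  ⟨satG_of_simCovers φ hT hS hTS hST, satG_of_simCovers φ hS hT hST hTS⟩

lemma image_doPair_prod_singleton (I : List ((v : V) × Val v)) (Tm : Set (Asg V Val))
    (F : Sys V Val) : doPair I '' (Tm ×ˢ {F}) = (doAsg F I '' Tm) ×ˢ {doSys F I} := by
  ext ⟨t, G⟩
  simp only [doPair, Set.mem_image, Set.mem_prod, Set.mem_singleton_iff, Prod.exists,
    Prod.mk.injEq]
  aesop

lemma satC_iff_satG_prod_singleton (φ : Fml V Val) :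
    ∀ (Tm : Set (Asg V Val)) (F : Sys V Val), satC Tm F φ ↔ satG (Tm ×ˢ {F}) φ := by
  induction φ with
  | eq v x => simp [satC, satG]
  | dep X Y => simp [satC, satG]
  | neg φ ih => simp [satC, satG, ih]
  | and φ ψ ihφ ihψ => simp only [satC, satG, ihφ, ihψ, implies_true]
  | or φ ψ ihφ ihψ =>
    intro Tm F
    simp only [satC, satG, ihφ, ihψ]
    constructor
    · rintro ⟨T₁, T₂, rfl, h₁, h₂⟩
      exact ⟨T₁ ×ˢ {F}, T₂ ×ˢ {F}, Set.union_prod.symm, h₁, h₂⟩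
    · rintro ⟨U₁, U₂, hU, h₁, h₂⟩
      refine ⟨Prod.fst '' U₁, Prod.fst '' U₂, ?_, ?_, ?_⟩
      · rw [← Set.image_union, hU, Set.fst_image_prod _ (Set.singleton_nonempty F)]
      · rwa [image_fst_prod_singleton (hU ▸ Set.subset_union_left)]
      · rwa [image_fst_prod_singleton (hU ▸ Set.subset_union_right)]
  | ior φ ψ ihφ ihψ => simp only [satC, satG, ihφ, ihψ, implies_true]
  | cf I φ ih =>
    intro Tm F
    simp only [satC, satG, ih]
    rw [← image_doPair_prod_singleton]
    rfl

end CausalTeam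

theorem closure_under_causal_equivalence_general {V : Type} [Fintype V] [DecidableEq V] [Nonempty V]
    {Val : V → Type} [∀ v, Fintype (Val v)] [∀ v, DecidableEq (Val v)] [∀ v, Nonempty (Val v)]
    (φ : Fml V Val) :
    (∀ (Tm Sm : Set (Asg V Val)) (F G : Sys V Val),
        (∀ s ∈ Tm, Compat F s) → (∀ s ∈ Sm, Compat G s) →
        Tm = Sm ∧ Sim F G → (satC Tm F φ ↔ satC Sm G φ)) ∧
    (∀ T S : Set (Asg V Val × Sys V Val), GTOk T → GTOk S →
        (∀ F : Sys V Val, gRestrict T F = gRestrict S F) → (satG T φ ↔ satG S φ)) := by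
  refine ⟨?_, fun T S hT hS hTS => ?_⟩
  · rintro Tm _ F G hF hG ⟨rfl, hFG⟩
    rw [satC_iff_satG_prod_singleton, satC_iff_satG_prod_singleton]
    exact satG_iff_of_simCovers (gtOk_prod_singleton hF) (gtOk_prod_singleton hG)
      (simCovers_prod_singleton Tm hFG) (simCovers_prod_singleton Tm hFG.symm) φ
  · exact satG_iff_of_simCovers hT hS (simCovers_of_gRestrict_subset fun F => (hTS F).ge)
      (simCovers_of_gRestrict_subset fun F => (hTS F).le) φ

/-- **Closure under causal equivalence**: equivalent (generalized) causal teams satisfy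
the same CO⩗[σ]- and COD[σ]-formulas. -/
theorem closure_under_causal_equivalence {V : Type} [Fintype V] [DecidableEq V] [Nonempty V]
    {Val : V → Type} [∀ v, Fintype (Val v)] [∀ v, DecidableEq (Val v)] [∀ v, Nonempty (Val v)]
    (φ : Fml V Val) (hφ : IsCOV φ ∨ IsCOD φ) :
    (∀ (Tm Sm : Set (Asg V Val)) (F G : Sys V Val),
        (∀ s ∈ Tm, Compat F s) → (∀ s ∈ Sm, Compat G s) →
        Tm = Sm ∧ Sim F G → (satC Tm F φ ↔ satC Sm G φ)) ∧
    (∀ T S : Set (Asg V Val × Sys V Val), GTOk T → GTOk S →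
        (∀ F : Sys V Val, gRestrict T F = gRestrict S F) → (satG T φ ↔ satG S φ)) :=
  closure_under_causal_equivalence_general φ
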